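/- arXiv:2304.04031 — 2 statements merged into one kernel-verified Lean document; each statement's English description precedes it below -/
import Mathlib

section
/- The second moment functional is maximized at zero at high temperature: Let Q ∈ ℝ^{n×n} be symmetric positive definite and β ∈ HT(Q). Then for every A ∈ ℝ^{n×n} such that the 2n×2n block matrix [[Q, A],[A^T, Q]] is positive definite, V(A) ≤ V(0), where V(A) = β^T A^{⊙2} β + (1/2) log det [[Q, A],[A^T, Q]] and A^{⊙2} denotes the entrywise square of A. -/
noncomputable section

open MeasureTheory ProbabilityTheory Filter Matrix Real
open scoped BigOperators ENNReal NNReal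

/-- The law of the disorder: i.i.d. standard Gaussian entries `J i j`. -/
def disorder (N : ℕ) : Measure (Fin N → Fin N → ℝ) :=
  Measure.pi fun _ => Measure.pi fun _ => gaussianReal 0 1

/-- Euclidean dot product on `Fin N → ℝ`. -/
def dot {N : ℕ} (x y : Fin N → ℝ) : ℝ := ∑ i, x i * y i

/-- The 2-spin SK Hamiltonian `H_N(σ) = √N ∑_{ij} J_{ij} σ_i σ_j`. -/
def ham (N : ℕ) (J : Fin N → Fin N → ℝ) (σ : Fin N → ℝ) : ℝ :=
  Real.sqrt N * ∑ i, ∑ j, J i j * σ i * σ j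

/-- The uniform probability measure on the unit sphere of `ℝ^N`
(the normalized spherical measure obtained from Lebesgue measure on
`EuclideanSpace ℝ (Fin N)`). -/
def sphereUniform (N : ℕ) : Measure (Fin N → ℝ) :=
  Measure.map (fun σ : Metric.sphere (0 : EuclideanSpace ℝ (Fin N)) 1 =>
      EuclideanSpace.equiv (Fin N) ℝ σ.val)
    (((volume : Measure (EuclideanSpace ℝ (Fin N))).toSphere Set.univ)⁻¹ •
      (volume : Measure (EuclideanSpace ℝ (Fin N))).toSphere)

/-- The product of `n` uniform sphere measures: the law of `σ⃗ = (σ^1, …, σ^n)`. -/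
def spheres (n N : ℕ) : Measure (Fin n → Fin N → ℝ) :=
  Measure.pi fun _ => sphereUniform N

/-- The set `Q_ε` of replicas whose overlaps are within `ε` of `Q`. -/
def overlapSet (n N : ℕ) (Q : Matrix (Fin n) (Fin n) ℝ) (ε : ℝ) :
    Set (Fin n → Fin N → ℝ) :=
  {σ | ∀ k l, |dot (σ k) (σ l) - Q k l| ≤ ε}

/-- The free energy `F^ε_N(β, h⃗, Q)`. -/
def freeEnergy (n N : ℕ) (β : Fin n → ℝ) (hvec : Fin n → Fin N → ℝ)
    (Q : Matrix (Fin n) (Fin n) ℝ) (ε : ℝ) (J : Fin N → Fin N → ℝ) : ℝ :=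
  (1 / (N : ℝ)) * Real.log (∫ σ in overlapSet n N Q ε,
      Real.exp (∑ k, (β k * ham N J (σ k) + N * dot (hvec k) (σ k))) ∂ spheres n N)

/-- The partition function without external field, `Z^ε_N(β, 0, Q)`. -/
def partitionZ (n N : ℕ) (β : Fin n → ℝ) (Q : Matrix (Fin n) (Fin n) ℝ)
    (ε : ℝ) (J : Fin N → Fin N → ℝ) : ℝ :=
  ∫ σ in overlapSet n N Q ε, Real.exp (∑ k, β k * ham N J (σ k)) ∂ spheres n N

/-- The overlap matrix `m⃗ m⃗ᵀ`. -/
def overlap {n N : ℕ} (m : Fin n → Fin N → ℝ) : Matrix (Fin n) (Fin n) ℝ :=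
  Matrix.of fun k l => dot (m k) (m l)

/-- `βᵀ A^{⊙2} β`, the quadratic form of the entrywise square of `A`. -/
def quadSq {n : ℕ} (β : Fin n → ℝ) (A : Matrix (Fin n) (Fin n) ℝ) : ℝ :=
  ∑ k, ∑ l, β k * β l * (A k l) ^ 2

/-- The TAP free energy `F_TAP(m⃗)`. -/
def FTAP (n N : ℕ) (β : Fin n → ℝ) (hvec : Fin n → Fin N → ℝ)
    (Q : Matrix (Fin n) (Fin n) ℝ) (J : Fin N → Fin N → ℝ)
    (m : Fin n → Fin N → ℝ) : ℝ :=
  ((N : ℝ) / 2) * Real.log (Q - overlap m).det + ∑ k, β k * ham N J (m k)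
    + N * ∑ k, dot (hvec k) (m k) + ((N : ℝ) / 2) * quadSq β (Q - overlap m)

/-- The spectral norm (operator norm with respect to Euclidean norms). -/
def matSpectralNorm {n : ℕ} (A : Matrix (Fin n) (Fin n) ℝ) : ℝ :=
  ‖LinearMap.toContinuousLinearMap (Matrix.toEuclideanLin A)‖

/-- The Frobenius norm of a matrix. -/
def frob {n : ℕ} (A : Matrix (Fin n) (Fin n) ℝ) : ℝ :=
  Real.sqrt (∑ k, ∑ l, (A k l) ^ 2)

/-- `𝛃^{1/2}`: the diagonal matrix with entries `√(β_k)` (the positive semidefinite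
square root of `diag β` for `β ≥ 0`). -/
def sqrtDiag {n : ℕ} (β : Fin n → ℝ) : Matrix (Fin n) (Fin n) ℝ :=
  Matrix.diagonal fun k => Real.sqrt (β k)

/-- `𝛃^{-1/2}`: the diagonal matrix with entries `(√(β_k))⁻¹`. -/
def invSqrtDiag {n : ℕ} (β : Fin n → ℝ) : Matrix (Fin n) (Fin n) ℝ :=
  Matrix.diagonal fun k => (Real.sqrt (β k))⁻¹

/-- The Plefka set `Plef_n(Q, β)` of `n × n` constraint matrices: entries in `[-1,1]`,
`0 ≤ Q̃ < Q` in the Loewner order, and `‖𝛃^{1/2}(Q - Q̃)𝛃^{1/2}‖₂ ≤ 1/√2`. -/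
def plefkaMat (n : ℕ) (Q : Matrix (Fin n) (Fin n) ℝ) (β : Fin n → ℝ) :
    Set (Matrix (Fin n) (Fin n) ℝ) :=
  {Qt | (∀ k l, |Qt k l| ≤ 1) ∧ Qt.PosSemidef ∧ (Q - Qt).PosDef ∧
    matSpectralNorm (sqrtDiag β * (Q - Qt) * sqrtDiag β) ≤ 1 / Real.sqrt 2}

/-- The Plefka set `Plef_N(Q, β)` of magnetization vectors. -/
def plefkaMag (n N : ℕ) (Q : Matrix (Fin n) (Fin n) ℝ) (β : Fin n → ℝ) :
    Set (Fin n → Fin N → ℝ) :=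
  {m | overlap m ∈ plefkaMat n Q β}

open scoped Classical in
/-- The positive semidefinite square root of a positive semidefinite matrix
(junk value `0` off the positive semidefinite matrices). -/
def msqrt {n : ℕ} (A : Matrix (Fin n) (Fin n) ℝ) : Matrix (Fin n) (Fin n) ℝ :=
  if h : A.PosSemidef then (h.1.eigenvectorUnitary : Matrix (Fin n) (Fin n) ℝ) *
      Matrix.diagonal (fun i => Real.sqrt (h.1.eigenvalues i)) *
      (star h.1.eigenvectorUnitary : Matrix (Fin n) (Fin n) ℝ) else 0

/-- The ground state energy functional `GSE(β, h, Q̃)`. -/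
def GSE (n : ℕ) (β h : Fin n → ℝ) (Qt : Matrix (Fin n) (Fin n) ℝ) : ℝ :=
  Real.sqrt 2 * Matrix.trace (msqrt
    (msqrt ((1 / 2 : ℝ) • Matrix.vecMulVec h h
        + Matrix.diagonal β * Qt * Matrix.diagonal β) * Qt *
      msqrt ((1 / 2 : ℝ) • Matrix.vecMulVec h h
        + Matrix.diagonal β * Qt * Matrix.diagonal β)))

/-- The high temperature region `HT(Q)`. -/
def HTset (n : ℕ) (Q : Matrix (Fin n) (Fin n) ℝ) : Set (Fin n → ℝ) :=
  {β | (∀ k, 0 ≤ β k) ∧ matSpectralNorm (sqrtDiag β * Q * sqrtDiag β) ≤ 1 / Real.sqrt 2}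

/-- The second moment functional `V(A)`. -/
def secondMomentV (n : ℕ) (Q : Matrix (Fin n) (Fin n) ℝ) (β : Fin n → ℝ)
    (A : Matrix (Fin n) (Fin n) ℝ) : ℝ :=
  quadSq β A + (1 / 2) * Real.log (Matrix.fromBlocks Q A Aᵀ Q).det

/-- The effective constraint matrix `Q̂(m⃗)`. -/
def Qhat {n N : ℕ} (Q : Matrix (Fin n) (Fin n) ℝ) (m : Fin n → Fin N → ℝ) :
    Matrix (Fin n) (Fin n) ℝ :=
  Matrix.of fun k l => (Q k l - dot (m k) (m l)) /
    (Real.sqrt (1 - dot (m k) (m k)) * Real.sqrt (1 - dot (m l) (m l)))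

/-- A vector of `ℝ^d` viewed in `ℝ^N` via a linear isometric embedding of
Euclidean spaces (whose range is a subspace of dimension `d`). -/
def emb {d N : ℕ} (φ : EuclideanSpace ℝ (Fin d) →ₗᵢ[ℝ] EuclideanSpace ℝ (Fin N))
    (x : Fin d → ℝ) : Fin N → ℝ :=
  EuclideanSpace.equiv (Fin N) ℝ (φ ((EuclideanSpace.equiv (Fin d) ℝ).symm x))


/-!
With `N = Aᵀ Q⁻¹ A`, the Schur complement gives `det [[Q, A], [Aᵀ, Q]] = det Q · det (Q - N)`,
and concavity of `log det` (its tangent-line bound at `Q`) gives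
`log det (Q - N) ≤ log det Q - tr (Q⁻¹ N)`. The high-temperature condition
`‖𝛃^{1/2} Q 𝛃^{1/2}‖₂ ≤ 1/√2` gives the Loewner bound `𝛃 ≤ Q⁻¹ / √2`; since
`βᵀ A^{⊙2} β = tr (Aᵀ 𝛃 A 𝛃)`, using it on each of the two factors `𝛃` yields
`βᵀ A^{⊙2} β ≤ tr (Aᵀ Q⁻¹ A Q⁻¹) / 2 = tr (Q⁻¹ N) / 2`. Adding the two bounds gives `V(A) ≤ V(0)`.
-/

open scoped MatrixOrder Matrix.Norms.L2Operator RealInnerProductSpace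

namespace Matrix

variable {ι : Type*} [Fintype ι] [DecidableEq ι]

lemma PosDef.exists_isHermitian_isUnit_mul_self_eq {Q : Matrix ι ι ℝ} (hQ : Q.PosDef) :
    ∃ S : Matrix ι ι ℝ, S.IsHermitian ∧ IsUnit S ∧ S * S = Q :=
  ⟨CFC.sqrt Q, (CFC.sqrt_nonneg Q).posSemidef.1,
    (CFC.isUnit_sqrt_iff Q hQ.posSemidef.nonneg).mpr hQ.isUnit,
    CFC.sqrt_mul_sqrt_self Q hQ.posSemidef.nonneg⟩

lemma IsHermitian.le_smul_one_of_l2_opNorm_le {M : Matrix ι ι ℝ} (hM : M.IsHermitian) {c : ℝ}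
    (h : ‖M‖ ≤ c) : M ≤ c • 1 := by
  rw [le_iff]
  refine .of_dotProduct_mulVec_nonneg ((isHermitian_one.smul (.all c)).sub hM) fun x => ?_
  set y : EuclideanSpace ℝ ι := WithLp.toLp 2 x
  have hquad : x ⬝ᵥ M *ᵥ x ≤ c * (x ⬝ᵥ x) :=
    calc x ⬝ᵥ M *ᵥ x = ⟪y, toEuclideanCLM (𝕜 := ℝ) M y⟫ := (inner_toEuclideanCLM M y y).symm
      _ ≤ ‖y‖ * ‖toEuclideanCLM (𝕜 := ℝ) M y‖ := real_inner_le_norm _ _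
      _ ≤ ‖y‖ * (c * ‖y‖) := by
        gcongr
        exact ((toEuclideanCLM (𝕜 := ℝ) M).le_opNorm y).trans (by rw [← cstar_norm_def]; gcongr)
      _ = c * ⟪y, y⟫ := by rw [real_inner_self_eq_norm_mul_norm]; ring
      _ = c * (x ⬝ᵥ x) := by rw [EuclideanSpace.inner_eq_star_dotProduct]; simp [y]
  simpa [sub_mulVec, smul_mulVec] using hquad

lemma PosDef.mul_self_le_smul_inv_of_l2_opNorm_le {Q D : Matrix ι ι ℝ} (hQ : Q.PosDef)
    (hD : D.IsHermitian) {c : ℝ} (h : ‖D * Q * D‖ ≤ c) : D * D ≤ c • Q⁻¹ := by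
  obtain ⟨S, hSh, hSu, hSS⟩ := hQ.exists_isHermitian_isUnit_mul_self_eq
  -- `‖X Xᴴ‖ = ‖X‖² = ‖Xᴴ X‖` for `X = S D`, and `Xᴴ X = D Q D`.
  have hnorm : ‖(S * D) * (S * D)ᴴ‖ ≤ c := by
    have hXX : (S * D)ᴴ * (S * D) = D * Q * D := by
      rw [conjTranspose_mul, hSh.eq, hD.eq, ← hSS]
      simp only [mul_assoc]
    have hC := l2_opNorm_conjTranspose_mul_self (S * D)ᴴ
    rw [conjTranspose_conjTranspose] at hC
    rwa [hC, l2_opNorm_conjTranspose, ← l2_opNorm_conjTranspose_mul_self, hXX]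
  have hle := star_left_conjugate_le_conjugate
    ((isHermitian_mul_conjTranspose_self (S * D)).le_smul_one_of_l2_opNorm_le hnorm) S⁻¹
  have hSdet := (isUnit_iff_isUnit_det S).mp hSu
  have hstar : star S⁻¹ = S⁻¹ := by rw [star_eq_conjTranspose, conjTranspose_nonsing_inv, hSh.eq]
  convert hle using 1
  · rw [hstar, conjTranspose_mul, hSh.eq, hD.eq]
    simp only [← mul_assoc]
    rw [nonsing_inv_mul S hSdet, Matrix.one_mul, mul_assoc, mul_nonsing_inv S hSdet,
      Matrix.mul_one]
  · rw [hstar, Matrix.mul_smul, mul_one, Matrix.smul_mul, ← mul_inv_rev, hSS]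

lemma PosSemidef.trace_mul_le_trace_mul {P M M' : Matrix ι ι ℝ} (hP : P.PosSemidef)
    (h : M ≤ M') : (P * M).trace ≤ (P * M').trace := by
  set S := CFC.sqrt P
  have hS : IsSelfAdjoint S := IsSelfAdjoint.of_nonneg (CFC.sqrt_nonneg P)
  have hconj (X : Matrix ι ι ℝ) : (P * X).trace = (star S * X * S).trace := by
    rw [hS.star_eq, trace_mul_cycle, CFC.sqrt_mul_sqrt_self P hP.nonneg]
  rw [hconj, hconj]
  exact (tracePositiveLinearMap ι ℝ ℝ).mono (star_left_conjugate_le_conjugate h S)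

lemma trace_transpose_mul_mul_mul_le_of_le_smul {B P : Matrix ι ι ℝ} (hB : B.PosSemidef)
    (hP : P.PosSemidef) {c : ℝ} (hc : 0 ≤ c) (h : B ≤ c • P) (A : Matrix ι ι ℝ) :
    (Aᵀ * B * A * B).trace ≤ c ^ 2 * (Aᵀ * P * A * P).trace := by
  have hAT : Aᴴ = Aᵀ := conjTranspose_eq_transpose_of_trivial A
  calc (Aᵀ * B * A * B).trace ≤ (Aᵀ * B * A * (c • P)).trace := by
        rw [← hAT]; exact (hB.conjTranspose_mul_mul_same A).trace_mul_le_trace_mul h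
    _ = c * (A * P * Aᵀ * B).trace := by
        rw [Matrix.mul_smul, trace_smul, smul_eq_mul, mul_assoc (Aᵀ * B), trace_mul_comm,
          ← mul_assoc]
    _ ≤ c * (A * P * Aᵀ * (c • P)).trace := by
        gcongr
        rw [← hAT]; exact (hP.mul_mul_conjTranspose_same A).trace_mul_le_trace_mul h
    _ = c ^ 2 * (Aᵀ * P * A * P).trace := by
        rw [Matrix.mul_smul, trace_smul, smul_eq_mul, mul_assoc (A * P), trace_mul_comm,
          ← mul_assoc (Aᵀ * P), ← mul_assoc, sq]

lemma PosDef.log_det_le_trace_sub_card {M : Matrix ι ι ℝ} (hM : M.PosDef) :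
    Real.log M.det ≤ M.trace - Fintype.card ι := by
  have hpos := hM.eigenvalues_pos
  rw [hM.1.det_eq_prod_eigenvalues, hM.1.trace_eq_sum_eigenvalues]
  simp only [RCLike.ofReal_real_eq_id, id_eq]
  rw [Real.log_prod fun i _ => (hpos i).ne']
  calc ∑ i, Real.log (hM.1.eigenvalues i) ≤ ∑ i, (hM.1.eigenvalues i - 1) :=
        Finset.sum_le_sum fun i _ => Real.log_le_sub_one_of_pos (hpos i)
    _ = _ := by simp [Finset.sum_sub_distrib]

lemma PosDef.log_det_le_log_det_add_trace {Q M : Matrix ι ι ℝ} (hQ : Q.PosDef)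
    (hM : M.PosDef) : Real.log M.det ≤ Real.log Q.det + (Q⁻¹ * (M - Q)).trace := by
  obtain ⟨T, hTh, hTu, hTT⟩ := hQ.inv.exists_isHermitian_isUnit_mul_self_eq
  have hK : (star T * M * T).PosDef := (IsUnit.posDef_star_left_conjugate_iff hTu).mpr hM
  have hdet : (star T * M * T).det = M.det * Q.det⁻¹ := by
    rw [star_eq_conjTranspose, hTh.eq, det_mul, det_mul, mul_right_comm, ← det_mul, hTT,
      det_nonsing_inv, Ring.inverse_eq_inv', mul_comm]
  have htr : (star T * M * T).trace = (Q⁻¹ * M).trace := by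
    rw [star_eq_conjTranspose, hTh.eq, trace_mul_cycle, hTT]
  have hlog := hK.log_det_le_trace_sub_card
  rw [hdet, htr, Real.log_mul hM.det_pos.ne' (inv_ne_zero hQ.det_pos.ne'), Real.log_inv] at hlog
  rw [mul_sub, trace_sub, nonsing_inv_mul Q ((isUnit_iff_isUnit_det Q).mp hQ.isUnit),
    trace_one]
  linarith

open scoped ComplexOrder in
lemma PosDef.posDef_sub_of_fromBlocks₁₁ {𝕜 m n : Type*} [RCLike 𝕜] [Fintype m] [Fintype n]
    [DecidableEq m] [DecidableEq n] {A : Matrix m m 𝕜} {B : Matrix m n 𝕜} {D : Matrix n n 𝕜}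
    (hA : A.PosDef) (h : (fromBlocks A B Bᴴ D).PosDef) : (D - Bᴴ * A⁻¹ * B).PosDef := by
  have : Invertible A := hA.isUnit.invertible
  refine ((PosDef.fromBlocks₁₁ B D hA).mp h.posSemidef).posDef_iff_det_ne_zero.mpr ?_
  have hdet := h.det_pos.ne'
  rw [det_fromBlocks₁₁, invOf_eq_nonsing_inv] at hdet
  exact right_ne_zero_of_mul hdet

end Matrix

open Matrix

lemma quadSq_eq_trace {n : ℕ} (β : Fin n → ℝ) (A : Matrix (Fin n) (Fin n) ℝ) :
    quadSq β A = (Aᵀ * diagonal β * A * diagonal β).trace := by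
  simp only [quadSq, trace, diag, mul_apply, transpose_apply, diagonal_apply, mul_ite, mul_zero,
    Finset.sum_ite_eq', Finset.mem_univ, if_true]
  rw [Finset.sum_comm]
  refine Finset.sum_congr rfl fun l _ => ?_
  rw [Finset.sum_mul]
  exact Finset.sum_congr rfl fun k _ => by ring

lemma quadSq_zero {n : ℕ} (β : Fin n → ℝ) : quadSq β 0 = 0 := by
  simp [quadSq]

lemma quadSq_le_half_trace_of_mem_HTset {n : ℕ} {Q : Matrix (Fin n) (Fin n) ℝ} (hQ : Q.PosDef)
    {β : Fin n → ℝ} (hβ : β ∈ HTset n Q) (A : Matrix (Fin n) (Fin n) ℝ) :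
    quadSq β A ≤ (Aᵀ * Q⁻¹ * A * Q⁻¹).trace / 2 := by
  obtain ⟨hβ_nonneg, hβ_norm⟩ := hβ
  have hsq : sqrtDiag β * sqrtDiag β = diagonal β := by
    rw [sqrtDiag, diagonal_mul_diagonal]
    exact congrArg diagonal (funext fun k => Real.mul_self_sqrt (hβ_nonneg k))
  have hle : diagonal β ≤ (1 / √2) • Q⁻¹ :=
    hsq ▸ hQ.mul_self_le_smul_inv_of_l2_opNorm_le (isHermitian_diagonal _) hβ_norm
  calc quadSq β A = (Aᵀ * diagonal β * A * diagonal β).trace := quadSq_eq_trace β A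
    _ ≤ (1 / √2) ^ 2 * (Aᵀ * Q⁻¹ * A * Q⁻¹).trace :=
        trace_transpose_mul_mul_mul_le_of_le_smul (posSemidef_diagonal_iff.mpr hβ_nonneg)
          hQ.inv.posSemidef (by positivity) hle A
    _ = (Aᵀ * Q⁻¹ * A * Q⁻¹).trace / 2 := by
        rw [div_pow, one_pow, Real.sq_sqrt zero_le_two]
        ring

theorem second_moment_maximized_at_zero_general (n : ℕ)
    (Q : Matrix (Fin n) (Fin n) ℝ) (hQpd : Q.PosDef)
    (β : Fin n → ℝ) (hβ : β ∈ HTset n Q)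
    (A : Matrix (Fin n) (Fin n) ℝ)
    (hA : (Matrix.fromBlocks Q A Aᵀ Q).PosDef) :
    secondMomentV n Q β A ≤ secondMomentV n Q β 0 := by
  have : Invertible Q := hQpd.isUnit.invertible
  set N := Aᵀ * Q⁻¹ * A
  have hAT : Aᴴ = Aᵀ := conjTranspose_eq_transpose_of_trivial A
  have hschur : (Q - N).PosDef := hQpd.posDef_sub_of_fromBlocks₁₁ (hAT ▸ hA)
  have hdet : (fromBlocks Q A Aᵀ Q).det = Q.det * (Q - N).det := by
    rw [det_fromBlocks₁₁, invOf_eq_nonsing_inv]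
  have hlog : Real.log (Q - N).det ≤ Real.log Q.det - (Q⁻¹ * N).trace := by
    have h := hQpd.log_det_le_log_det_add_trace hschur
    rwa [sub_sub_cancel_left, Matrix.mul_neg, trace_neg, ← sub_eq_add_neg] at h
  have hquad := quadSq_le_half_trace_of_mem_HTset hQpd hβ A
  have htr : (Aᵀ * Q⁻¹ * A * Q⁻¹).trace = (Q⁻¹ * N).trace := trace_mul_comm _ _
  rw [secondMomentV, secondMomentV, hdet, quadSq_zero, transpose_zero, det_fromBlocks_zero₂₁,
    Real.log_mul hQpd.det_pos.ne' hschur.det_pos.ne',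
    Real.log_mul hQpd.det_pos.ne' hQpd.det_pos.ne']
  linarith

/-- **The second moment functional is maximized at zero at high temperature**
(Proposition 3.6): for positive definite `Q` and `β ∈ HT(Q)`, `V(A) ≤ V(0)` for all
`A` such that the block matrix `[[Q, A], [Aᵀ, Q]]` is positive definite. -/
theorem second_moment_maximized_at_zero (n : ℕ)
    (Q : Matrix (Fin n) (Fin n) ℝ) (hQsym : Q.IsSymm) (hQpd : Q.PosDef)
    (β : Fin n → ℝ) (hβ : β ∈ HTset n Q)
    (A : Matrix (Fin n) (Fin n) ℝ)
    (hA : (Matrix.fromBlocks Q A Aᵀ Q).PosDef) :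
    secondMomentV n Q β A ≤ secondMomentV n Q β 0 :=
  second_moment_maximized_at_zero_general n Q hQpd β hβ A hA

end
end

section
/- Lipschitz property of the free energy in the inverse temperatures: Let n ≥ 1, C > 0 and ε > 0. There exists L = L(C,n) > 0 such that lim_{N→∞} P( for all symmetric positive definite Q ∈ ℝ^{n×n} with ones on the diagonal and all β¹, β² ∈ [0,∞)^n with |β¹|, |β²| ≤ C : |F^ε_N(β¹,0,Q) − F^ε_N(β²,0,Q)| ≤ L |β¹ − β²| ) = 1. -/
noncomputable section

open MeasureTheory ProbabilityTheory Filter Matrix Real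
open scoped BigOperators ENNReal NNReal

/-!
On the unit sphere `H_N(σ) = √N ⟪A σ, σ⟫`, where `A` is the symmetrization of `J`, so
`|H_N| ≤ √N ‖A‖`. The free energy is a normalized log-Laplace transform of `∑ₖ βₖ H_N(σᵏ)`,
hence `|F(β¹) - F(β²)| ≤ ‖A‖ / √N · ∑ₖ |β¹ₖ - β²ₖ| ≤ √n ‖A‖ / √N · |β¹ - β²|`, and it suffices
that `‖A‖ ≤ 8√N` with probability tending to one. For symmetric `A`, `‖A‖` is at most twice
the maximum of `|⟪A y, y⟫|` over a `1/4`-net of the sphere, and a volume argument gives such a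
net with at most `9^N` points. Each `⟪A y, y⟫ = ∑ᵢⱼ Jᵢⱼ yᵢ yⱼ` is a standard Gaussian, so a union
bound at level `4√N` fails with probability at most `9^N · 2e^{-8N} = 2 (9e^{-8})^N → 0`.
-/

open Metric Module
open scoped RealInnerProductSpace

theorem abs_log_integral_exp_sub_le {α : Type*} {m : MeasurableSpace α} {μ : Measure α}
    {f g : α → ℝ} {c : ℝ} (hc : 0 ≤ c) (hf : Integrable (fun a => exp (f a)) μ)
    (hg : Integrable (fun a => exp (g a)) μ) (hfg : ∀ᵐ a ∂μ, |f a - g a| ≤ c) :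
    |log (∫ a, exp (f a) ∂μ) - log (∫ a, exp (g a) ∂μ)| ≤ c := by
  have hle {f g : α → ℝ} (hf : Integrable (fun a => exp (f a)) μ)
      (hg : Integrable (fun a => exp (g a)) μ) (hfg : ∀ᵐ a ∂μ, f a ≤ g a + c) :
      ∫ a, exp (f a) ∂μ ≤ exp c * ∫ a, exp (g a) ∂μ := by
    rw [← integral_const_mul]
    refine integral_mono_ae hf (hg.const_mul _) ?_
    filter_upwards [hfg] with a ha
    rw [← exp_add]
    exact exp_le_exp.2 (by linarith)
  have h₁ := hle hf hg (hfg.mono fun a ha => by linarith [(abs_le.1 ha).2])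
  have h₂ := hle hg hf (hfg.mono fun a ha => by linarith [(abs_le.1 ha).1])
  have hf₀ : 0 ≤ ∫ a, exp (f a) ∂μ := integral_nonneg fun a => (exp_pos _).le
  have hg₀ : 0 ≤ ∫ a, exp (g a) ∂μ := integral_nonneg fun a => (exp_pos _).le
  rcases hf₀.eq_or_lt with hf0 | hfpos
  · have hg0 : ∫ a, exp (g a) ∂μ = 0 := by
      rw [← hf0, mul_zero] at h₂; exact le_antisymm h₂ hg₀
    simpa [← hf0, hg0] using hc
  have hgpos : 0 < ∫ a, exp (g a) ∂μ := by
    by_contra! hg0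
    have := h₁.trans (by nlinarith [exp_pos c] : exp c * ∫ a, exp (g a) ∂μ ≤ 0)
    linarith
  have key {x y : ℝ} (hx : 0 < x) (hy : 0 < y) (h : x ≤ exp c * y) : log x ≤ log y + c := by
    simpa [log_mul (exp_pos c).ne' hy.ne', add_comm] using log_le_log hx h
  exact abs_sub_le_iff.2 ⟨by linarith [key hfpos hgpos h₁], by linarith [key hgpos hfpos h₂]⟩

theorem sum_abs_le_sqrt_card_mul_sqrt_sum_sq {ι : Type*} (s : Finset ι) (a : ι → ℝ) :
    ∑ i ∈ s, |a i| ≤ Real.sqrt s.card * Real.sqrt (∑ i ∈ s, a i ^ 2) := by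
  rw [← Real.sqrt_mul (Nat.cast_nonneg _), Real.le_sqrt (by positivity) (by positivity)]
  simpa only [sq_abs] using sq_sum_le_card_mul_sum_sq (s := s) (f := fun i => |a i|)

theorem tendsto_measure_one_of_measure_compl_le {Ω : ℕ → Type*} [∀ N, MeasurableSpace (Ω N)]
    {μ : ∀ N, Measure (Ω N)} [∀ N, IsProbabilityMeasure (μ N)] {S : ∀ N, Set (Ω N)}
    {a : ℕ → ℝ≥0∞} (ha : Tendsto a atTop (nhds 0)) (h : ∀ N, μ N (S N)ᶜ ≤ a N) :
    Tendsto (fun N => μ N (S N)) atTop (nhds 1) := by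
  have hlow : ∀ N, 1 - a N ≤ μ N (S N) := fun N => by
    rw [tsub_le_iff_right, ← measure_univ (μ := μ N), ← Set.union_compl_self (S N)]
    exact (measure_union_le _ _).trans (add_le_add le_rfl (h N))
  have hlim : Tendsto (fun N => 1 - a N) atTop (nhds 1) := by
    simpa using ENNReal.Tendsto.sub tendsto_const_nhds ha (Or.inl ENNReal.one_ne_top)
  exact tendsto_of_tendsto_of_tendsto_of_le_of_le hlim tendsto_const_nhds hlow
    fun N => prob_le_one

theorem Finset.card_le_of_pairwise_le_dist {E : Type*} [NormedAddCommGroup E] [NormedSpace ℝ E]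
    [FiniteDimensional ℝ E] (s : Finset E) {R δ : ℝ} (hR : 0 ≤ R) (hδ : 0 < δ)
    (hs : ∀ c ∈ s, ‖c‖ ≤ R) (hsep : (s : Set E).Pairwise fun c d => 2 * δ ≤ dist c d) :
    (s.card : ℝ) ≤ ((R + δ) / δ) ^ finrank ℝ E := by
  borelize E
  let μ : Measure E := Measure.addHaar
  have hdisj : (s : Set E).PairwiseDisjoint fun c => ball c δ := fun c hc d hd hcd =>
    ball_disjoint_ball (by linarith [hsep hc hd hcd])
  have hsub : (⋃ c ∈ s, ball c δ) ⊆ ball (0 : E) (R + δ) := by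
    refine Set.iUnion₂_subset fun c hc => ball_subset_ball' ?_
    rw [dist_zero_right]; linarith [hs c hc]
  have hvol : (s.card : ℝ≥0∞) * ENNReal.ofReal (δ ^ finrank ℝ E) * μ (ball 0 1) ≤
      ENNReal.ofReal ((R + δ) ^ finrank ℝ E) * μ (ball 0 1) := by
    calc (s.card : ℝ≥0∞) * ENNReal.ofReal (δ ^ finrank ℝ E) * μ (ball 0 1)
        = μ (⋃ c ∈ s, ball c δ) := by
          rw [measure_biUnion_finset hdisj fun c _ => measurableSet_ball]
          simp only [μ.addHaar_ball_of_pos _ hδ, Finset.sum_const, nsmul_eq_mul, mul_assoc]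
      _ ≤ μ (ball 0 (R + δ)) := measure_mono hsub
      _ = _ := μ.addHaar_ball_of_pos _ (by positivity)
  have := (ENNReal.mul_le_mul_iff_left (measure_ball_pos μ _ zero_lt_one).ne'
    measure_ball_lt_top.ne).1 hvol
  rw [← ENNReal.ofReal_natCast, ← ENNReal.ofReal_mul (by positivity),
    ENNReal.ofReal_le_ofReal_iff (by positivity)] at this
  rwa [div_pow, le_div_iff₀ (by positivity)]

theorem encard_le_of_isSeparated_sphere {E : Type*} [NormedAddCommGroup E] [NormedSpace ℝ E]
    [FiniteDimensional ℝ E] {C : Set E} (hC : C ⊆ sphere 0 1)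
    (hsep : IsSeparated ((1 / 4 : ℝ≥0) : ℝ≥0∞) C) : C.encard ≤ (9 ^ finrank ℝ E : ℕ) := by
  by_contra! hlt
  obtain ⟨t, htC, htcard⟩ := Set.exists_subset_encard_eq (Order.add_one_le_of_lt hlt)
  have htfin : t.Finite := Set.finite_of_encard_eq_coe htcard
  have hmem {c : E} (hc : c ∈ htfin.toFinset) : c ∈ C := htC (htfin.mem_toFinset.1 hc)
  have hdist {c d : E} (hc : c ∈ htfin.toFinset) (hd : d ∈ htfin.toFinset) (hcd : c ≠ d) :
      2 * (1 / 8 : ℝ) ≤ dist c d := by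
    have h : ((1 / 4 : ℝ≥0) : ℝ≥0∞) < edist c d := hsep (hmem hc) (hmem hd) hcd
    rw [edist_nndist, ENNReal.coe_lt_coe, ← NNReal.coe_lt_coe, coe_nndist] at h
    norm_num at h ⊢; exact h.le
  have hcard := Finset.card_le_of_pairwise_le_dist htfin.toFinset zero_le_one
    (by norm_num : (0 : ℝ) < 1 / 8) (fun c hc => (mem_sphere_zero_iff_norm.1 (hC (hmem hc))).le)
    fun c hc d hd => hdist hc hd
  have htcard' : (htfin.toFinset.card : ℝ) = 9 ^ finrank ℝ E + 1 := by
    rw [htfin.encard_eq_coe_toFinset_card] at htcard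
    exact_mod_cast htcard
  norm_num [htcard'] at hcard

theorem exists_finset_isCover_sphere (E : Type*) [NormedAddCommGroup E] [NormedSpace ℝ E]
    [FiniteDimensional ℝ E] :
    ∃ T : Finset E, (T : Set E) ⊆ sphere 0 1 ∧ T.card ≤ 9 ^ finrank ℝ E ∧
      ∀ x ∈ sphere (0 : E) 1, ∃ y ∈ T, dist x y ≤ 1 / 4 := by
  have hpack : packingNumber (1 / 4) (sphere (0 : E) 1) ≤ (9 ^ finrank ℝ E : ℕ) :=
    iSup₂_le fun C hC => iSup_le fun hsep => encard_le_of_isSeparated_sphere hC hsep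
  have htop : packingNumber (1 / 4) (sphere (0 : E) 1) ≠ ⊤ :=
    ne_top_of_le_ne_top (ENat.natCast_ne_top _) hpack
  have hfin : (maximalSeparatedSet (1 / 4) (sphere (0 : E) 1)).Finite :=
    Set.encard_ne_top_iff.1 (by rwa [encard_maximalSeparatedSet htop])
  refine ⟨hfin.toFinset, by simpa using maximalSeparatedSet_subset, ?_, fun x hx => ?_⟩
  · have := (encard_maximalSeparatedSet htop).trans_le hpack
    rw [hfin.encard_eq_coe_toFinset_card] at this
    exact_mod_cast this
  · obtain ⟨y, hy, hxy⟩ := Set.mem_iUnion₂.1 (isCover_iff_subset_iUnion_closedBall.1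
      (isCover_maximalSeparatedSet htop) hx)
    exact ⟨y, by simpa using hy, by simpa using hxy⟩

theorem ContinuousLinearMap.abs_inner_le_norm_mul_norm_mul_norm {E : Type*}
    [NormedAddCommGroup E] [InnerProductSpace ℝ E] (T : E →L[ℝ] E) (u v : E) :
    |⟪T u, v⟫| ≤ ‖T‖ * ‖u‖ * ‖v‖ :=
  (abs_real_inner_le_norm _ _).trans
    (mul_le_mul_of_nonneg_right (T.le_opNorm u) (norm_nonneg v))

theorem ContinuousLinearMap.abs_inner_self_le_of_sphere_net {E : Type*} [NormedAddCommGroup E]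
    [InnerProductSpace ℝ E] (T : E →L[ℝ] E) {N : Set E} (hN : N ⊆ sphere 0 1)
    (hcov : ∀ x ∈ sphere (0 : E) 1, ∃ y ∈ N, dist x y ≤ 1 / 4) {K : ℝ}
    (hK : ∀ y ∈ N, |⟪T y, y⟫| ≤ K) {x : E} (hx : ‖x‖ = 1) :
    |⟪T x, x⟫| ≤ K + ‖T‖ / 2 := by
  obtain ⟨y, hyN, hxy⟩ := hcov x (by simpa using hx)
  have hy := mem_sphere_zero_iff_norm.1 (hN hyN)
  rw [dist_eq_norm] at hxy
  have h₁ := T.abs_inner_le_norm_mul_norm_mul_norm x (x - y)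
  have h₂ := T.abs_inner_le_norm_mul_norm_mul_norm (x - y) y
  rw [hx] at h₁
  rw [hy] at h₂
  have hsplit : ⟪T x, x⟫ = ⟪T y, y⟫ + ⟪T x, x - y⟫ + ⟪T (x - y), y⟫ := by
    simp only [inner_sub_right, map_sub, inner_sub_left]; ring
  calc |⟪T x, x⟫| ≤ |⟪T y, y⟫| + |⟪T x, x - y⟫| + |⟪T (x - y), y⟫| :=
        hsplit ▸ abs_add_three _ _ _
    _ ≤ K + ‖T‖ * 1 * (1 / 4) + ‖T‖ * (1 / 4) * 1 := by
        gcongr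
        exacts [hK y hyN, h₁.trans (by gcongr), h₂.trans (by gcongr)]
    _ = K + ‖T‖ / 2 := by ring

theorem ContinuousLinearMap.norm_le_two_mul_of_sphere_net {E : Type*} [NormedAddCommGroup E]
    [InnerProductSpace ℝ E] (T : E →L[ℝ] E) (hT : (T : E →ₗ[ℝ] E).IsSymmetric) {N : Set E}
    (hN : N ⊆ sphere 0 1) (hcov : ∀ x ∈ sphere (0 : E) 1, ∃ y ∈ N, dist x y ≤ 1 / 4)
    {K : ℝ} (hK₀ : 0 ≤ K) (hK : ∀ y ∈ N, |⟪T y, y⟫| ≤ K) : ‖T‖ ≤ 2 * K := by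
  have hrayleigh : ∀ x, |T.rayleighQuotient x| ≤ K + ‖T‖ / 2 := by
    intro x
    rcases eq_or_ne x 0 with rfl | hx
    · simp only [ContinuousLinearMap.rayleighQuotient_apply_zero, abs_zero]; positivity
    have hu : ‖(‖x‖⁻¹ : ℝ) • x‖ = 1 := norm_smul_inv_norm hx
    rw [← T.rayleigh_smul x (inv_ne_zero (norm_ne_zero_iff.2 hx)),
      ContinuousLinearMap.rayleighQuotient, hu]
    simpa [ContinuousLinearMap.reApplyInnerSelf] using
      T.abs_inner_self_le_of_sphere_net hN hcov hK hu
  have := (T.norm_eq_iSup_rayleighQuotient hT).trans_le (ciSup_le hrayleigh)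
  linarith

theorem hasSubgaussianMGF_fun_id_gaussianReal (v : ℝ≥0) :
    HasSubgaussianMGF (fun x => x) v (gaussianReal 0 v) where
  integrable_exp_mul t := integrable_exp_mul_gaussianReal t
  mgf_le t := by simp [mgf_fun_id_gaussianReal]

theorem ProbabilityTheory.HasSubgaussianMGF.sum_pi {ι : Type*} [Fintype ι] {Ω : ι → Type*}
    [∀ i, MeasurableSpace (Ω i)] {μ : ∀ i, Measure (Ω i)} [∀ i, IsProbabilityMeasure (μ i)]
    {X : ∀ i, Ω i → ℝ} {c : ι → ℝ≥0} (h : ∀ i, HasSubgaussianMGF (X i) (c i) (μ i)) :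
    HasSubgaussianMGF (fun ω => ∑ i, X i (ω i)) (∑ i, c i) (Measure.pi μ) := by
  refine HasSubgaussianMGF.sum_of_iIndepFun (iIndepFun_pi fun i => (h i).aemeasurable)
    fun i _ => ?_
  refine HasSubgaussianMGF.of_map (X := X i) (measurable_pi_apply i).aemeasurable ?_
  rw [(measurePreserving_eval μ i).map_eq]
  exact h i

theorem ProbabilityTheory.HasSubgaussianMGF.measure_abs_ge_le {Ω : Type*} [MeasurableSpace Ω]
    {μ : Measure Ω} [IsFiniteMeasure μ] {X : Ω → ℝ} {c : ℝ≥0} (h : HasSubgaussianMGF X c μ)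
    {t : ℝ} (ht : 0 ≤ t) :
    μ {ω | t ≤ |X ω|} ≤ ENNReal.ofReal (2 * exp (-t ^ 2 / (2 * c))) := by
  have htail {Y : Ω → ℝ} (hY : HasSubgaussianMGF Y c μ) :
      μ {ω | t ≤ Y ω} ≤ ENNReal.ofReal (exp (-t ^ 2 / (2 * c))) := by
    rw [← ofReal_measureReal]
    exact ENNReal.ofReal_le_ofReal (hY.measure_ge_le ht)
  calc μ {ω | t ≤ |X ω|} ≤ μ ({ω | t ≤ X ω} ∪ {ω | t ≤ (-X) ω}) := by
        refine measure_mono fun ω hω => ?_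
        rcases le_abs'.1 (show t ≤ |X ω| from hω) with h | h
        · right; show t ≤ -X ω; linarith
        · left; exact h
    _ ≤ μ {ω | t ≤ X ω} + μ {ω | t ≤ (-X) ω} := measure_union_le _ _
    _ ≤ ENNReal.ofReal (exp (-t ^ 2 / (2 * c))) + ENNReal.ofReal (exp (-t ^ 2 / (2 * c))) :=
        add_le_add (htail h) (htail h.neg)
    _ = ENNReal.ofReal (2 * exp (-t ^ 2 / (2 * c))) := by
        rw [← ENNReal.ofReal_add (by positivity) (by positivity)]; ring_nf

def couplingOp {N : ℕ} (J : Fin N → Fin N → ℝ) :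
    EuclideanSpace ℝ (Fin N) →L[ℝ] EuclideanSpace ℝ (Fin N) :=
  Matrix.toEuclideanCLM (𝕜 := ℝ) ((2⁻¹ : ℝ) • (Matrix.of J + (Matrix.of J)ᴴ))

theorem isSymmetric_couplingOp {N : ℕ} (J : Fin N → Fin N → ℝ) :
    (couplingOp J : EuclideanSpace ℝ (Fin N) →ₗ[ℝ] EuclideanSpace ℝ (Fin N)).IsSymmetric := by
  rw [couplingOp, Matrix.coe_toEuclideanCLM_eq_toEuclideanLin,
    Matrix.isSymmetric_toEuclideanLin_iff]
  exact (Matrix.isHermitian_add_transpose_self _).smul (IsSelfAdjoint.all _)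

theorem inner_couplingOp_self {N : ℕ} (J : Fin N → Fin N → ℝ) (x : EuclideanSpace ℝ (Fin N)) :
    ⟪couplingOp J x, x⟫ = ∑ i, ∑ j, J i j * x i * x j := by
  rw [couplingOp, ← WithLp.toLp_ofLp (p := 2) x, Matrix.toEuclideanCLM_toLp,
    EuclideanSpace.inner_eq_star_dotProduct]
  simp only [dotProduct, conjTranspose_eq_transpose_of_trivial, smul_add, smul_of, Pi.star_apply,
    mulVec, Matrix.add_apply, of_apply, Pi.smul_apply, smul_eq_mul, Matrix.smul_apply,
    transpose_apply, star_trivial, Finset.mul_sum]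
  have hswap : ∑ i, ∑ j, J j i * x i * x j = ∑ i, ∑ j, J i j * x i * x j := by
    rw [Finset.sum_comm]; simp only [mul_right_comm]
  calc _ = 2⁻¹ * ∑ i, ∑ j, J i j * x i * x j + 2⁻¹ * ∑ i, ∑ j, J j i * x i * x j := by
        simp only [Finset.mul_sum, ← Finset.sum_add_distrib]
        exact Finset.sum_congr rfl fun i _ => Finset.sum_congr rfl fun j _ => by ring
    _ = _ := by rw [hswap]; ring

theorem ham_eq_inner_couplingOp (N : ℕ) (J : Fin N → Fin N → ℝ) (σ : Fin N → ℝ) :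
    ham N J σ = Real.sqrt N * ⟪couplingOp J (WithLp.toLp 2 σ), WithLp.toLp 2 σ⟫ := by
  rw [inner_couplingOp_self, ham]

instance (N : ℕ) : IsProbabilityMeasure (disorder N) := by
  unfold disorder; infer_instance

theorem hasSubgaussianMGF_disorder_sum (N : ℕ) (c : Fin N → Fin N → ℝ) :
    HasSubgaussianMGF (fun J => ∑ i, ∑ j, c i j * J i j) (∑ i, ∑ j, ‖c i j‖₊ ^ 2)
      (disorder N) :=
  HasSubgaussianMGF.sum_pi fun i => HasSubgaussianMGF.sum_pi fun j => by
    convert (hasSubgaussianMGF_fun_id_gaussianReal 1).const_mul (c i j) using 1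
    change _ = (⟨c i j ^ 2, sq_nonneg _⟩ : ℝ≥0) * 1
    rw [mul_one]; ext; simp

theorem disorder_abs_inner_couplingOp_ge_le (N : ℕ) {y : EuclideanSpace ℝ (Fin N)} (hy : ‖y‖ = 1)
    {t : ℝ} (ht : 0 ≤ t) :
    disorder N {J | t ≤ |⟪couplingOp J y, y⟫|} ≤ ENNReal.ofReal (2 * exp (-t ^ 2 / 2)) := by
  have hnorm : ∑ i, y i ^ 2 = 1 := by simpa [hy] using (EuclideanSpace.norm_sq_eq y).symm
  have hvar : ∑ i, ∑ j, ‖y i * y j‖₊ ^ 2 = 1 := by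
    ext
    simp [mul_pow, ← Finset.mul_sum, ← Finset.sum_mul, hnorm]
  have := (hasSubgaussianMGF_disorder_sum N fun i j => y i * y j).measure_abs_ge_le ht
  rw [hvar] at this
  simpa [inner_couplingOp_self, mul_assoc, mul_comm] using this

theorem disorder_exists_abs_inner_couplingOp_ge_le {N : ℕ}
    {T : Finset (EuclideanSpace ℝ (Fin N))} (hT : (T : Set (EuclideanSpace ℝ (Fin N))) ⊆ sphere 0 1)
    {t : ℝ} (ht : 0 ≤ t) :
    disorder N {J | ∃ y ∈ T, t ≤ |⟪couplingOp J y, y⟫|}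
      ≤ T.card * ENNReal.ofReal (2 * Real.exp (-t ^ 2 / 2)) := by
  calc _ ≤ ∑ y ∈ T, disorder N {J | t ≤ |⟪couplingOp J y, y⟫|} :=
        (measure_mono fun J hJ => by simpa using hJ).trans (measure_biUnion_finset_le _ _)
    _ ≤ ∑ _y ∈ T, ENNReal.ofReal (2 * Real.exp (-t ^ 2 / 2)) := Finset.sum_le_sum fun y hy =>
        disorder_abs_inner_couplingOp_ge_le N (mem_sphere_zero_iff_norm.1 (hT hy)) ht
    _ = _ := by rw [Finset.sum_const, nsmul_eq_mul]

theorem disorder_norm_couplingOp_gt_le (N : ℕ) :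
    disorder N {J | 8 * Real.sqrt N < ‖couplingOp J‖}
      ≤ ENNReal.ofReal (2 * (9 * Real.exp (-8)) ^ N) := by
  obtain ⟨T, hT, hcard, hcov⟩ := exists_finset_isCover_sphere (EuclideanSpace ℝ (Fin N))
  have hsub : {J | 8 * Real.sqrt N < ‖couplingOp J‖}
      ⊆ {J | ∃ y ∈ T, 4 * Real.sqrt N ≤ |⟪couplingOp J y, y⟫|} := fun J hJ => by
    change 8 * Real.sqrt N < ‖couplingOp J‖ at hJ
    change ∃ y ∈ T, _
    by_contra! hnet
    have := (couplingOp J).norm_le_two_mul_of_sphere_net (isSymmetric_couplingOp J) hT hcov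
      (by positivity) fun y hy => (hnet y hy).le
    linarith
  calc _ ≤ _ := (measure_mono hsub).trans
        (disorder_exists_abs_inner_couplingOp_ge_le hT (by positivity))
    _ ≤ (9 ^ N : ℕ) * ENNReal.ofReal (2 * Real.exp (-8 * N)) := by
        gcongr
        · simpa using hcard
        · rw [mul_pow, Real.sq_sqrt (Nat.cast_nonneg _)]; linarith
    _ = _ := by
        rw [← ENNReal.ofReal_natCast, ← ENNReal.ofReal_mul (by positivity), mul_pow,
          ← Real.exp_nat_mul]
        push_cast; ring_nf

theorem abs_ham_le_norm_couplingOp {N : ℕ} (J : Fin N → Fin N → ℝ) {σ : Fin N → ℝ}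
    (hσ : ‖(WithLp.toLp 2 σ : EuclideanSpace ℝ (Fin N))‖ = 1) :
    |ham N J σ| ≤ Real.sqrt N * ‖couplingOp J‖ := by
  rw [ham_eq_inner_couplingOp, abs_mul, abs_of_nonneg (Real.sqrt_nonneg _)]
  gcongr
  simpa [hσ] using
    (couplingOp J).abs_inner_le_norm_mul_norm_mul_norm (WithLp.toLp 2 σ) (WithLp.toLp 2 σ)

instance (N : ℕ) : IsFiniteMeasure (sphereUniform N) := by
  unfold sphereUniform
  have : IsFiniteMeasure (((volume : Measure (EuclideanSpace ℝ (Fin N))).toSphere Set.univ)⁻¹ •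
      (volume : Measure (EuclideanSpace ℝ (Fin N))).toSphere) :=
    ⟨by simpa using (ENNReal.inv_mul_le_one _).trans_lt ENNReal.one_lt_top⟩
  infer_instance

instance (n N : ℕ) : IsFiniteMeasure (spheres n N) := by
  unfold spheres; infer_instance

theorem ae_norm_eq_one_spheres (n N : ℕ) :
    ∀ᵐ σ ∂spheres n N, ∀ k, ‖(WithLp.toLp 2 (σ k) : EuclideanSpace ℝ (Fin N))‖ = 1 := by
  have hsphere : ∀ᵐ x ∂sphereUniform N, ‖(WithLp.toLp 2 x : EuclideanSpace ℝ (Fin N))‖ = 1 := by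
    rw [sphereUniform, ae_map_iff (by fun_prop)
      (isClosed_eq (by fun_prop) continuous_const).measurableSet]
    exact Filter.Eventually.of_forall fun x => mem_sphere_zero_iff_norm.1 x.2
  exact ae_all_iff.2 fun k => (Measure.tendsto_eval_ae_ae (μ := fun _ => sphereUniform N)
    (i := k)).eventually hsphere

theorem freeEnergy_zero_field (n N : ℕ) (β : Fin n → ℝ) (Q : Matrix (Fin n) (Fin n) ℝ) (ε : ℝ)
    (J : Fin N → Fin N → ℝ) :
    freeEnergy n N β 0 Q ε J = Real.log (partitionZ n N β Q ε J) / N := by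
  simp [freeEnergy, partitionZ, dot, div_eq_inv_mul]

@[fun_prop]
theorem continuous_ham (N : ℕ) (J : Fin N → Fin N → ℝ) : Continuous (ham N J) := by
  unfold ham; fun_prop

theorem abs_log_partitionZ_sub_le {n N : ℕ} {J : Fin N → Fin N → ℝ} {B : ℝ} (hB₀ : 0 ≤ B)
    (hB : ∀ σ : Fin N → ℝ, ‖(WithLp.toLp 2 σ : EuclideanSpace ℝ (Fin N))‖ = 1 →
      |ham N J σ| ≤ B)
    (β₁ β₂ : Fin n → ℝ) (Q : Matrix (Fin n) (Fin n) ℝ) (ε : ℝ) :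
    |Real.log (partitionZ n N β₁ Q ε J) - Real.log (partitionZ n N β₂ Q ε J)|
      ≤ B * ∑ k, |β₁ k - β₂ k| := by
  have hham : ∀ᵐ σ ∂(spheres n N).restrict (overlapSet n N Q ε), ∀ k, |ham N J (σ k)| ≤ B :=
    ae_restrict_of_ae ((ae_norm_eq_one_spheres n N).mono fun σ hσ k => hB _ (hσ k))
  have hsum : ∀ (a : Fin n → ℝ) (σ : Fin n → Fin N → ℝ), (∀ k, |ham N J (σ k)| ≤ B) →
      |∑ k, a k * ham N J (σ k)| ≤ B * ∑ k, |a k| := fun a σ hσ => by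
    rw [Finset.mul_sum]
    refine (Finset.abs_sum_le_sum_abs _ _).trans (Finset.sum_le_sum fun k _ => ?_)
    rw [abs_mul, mul_comm B]
    exact mul_le_mul_of_nonneg_left (hσ k) (abs_nonneg _)
  have hint : ∀ β : Fin n → ℝ, Integrable (fun σ : Fin n → Fin N → ℝ =>
      Real.exp (∑ k, β k * ham N J (σ k))) ((spheres n N).restrict (overlapSet n N Q ε)) := by
    intro β
    refine Integrable.of_bound (Continuous.aestronglyMeasurable (by fun_prop))
      (Real.exp (∑ k, |β k| * B)) ?_
    filter_upwards [hham] with σ hσ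
    rw [Real.norm_eq_abs, Real.abs_exp, Real.exp_le_exp, ← Finset.sum_mul, mul_comm]
    exact (le_abs_self _).trans (hsum β σ hσ)
  refine abs_log_integral_exp_sub_le (by positivity) (hint β₁) (hint β₂) ?_
  filter_upwards [hham] with σ hσ
  simpa only [← Finset.sum_sub_distrib, ← sub_mul, Pi.sub_apply] using hsum (β₁ - β₂) σ hσ

theorem abs_freeEnergy_sub_le {n N : ℕ} {J : Fin N → Fin N → ℝ} {c : ℝ} (hc : 0 ≤ c)
    (hham : ∀ σ : Fin N → ℝ, ‖(WithLp.toLp 2 σ : EuclideanSpace ℝ (Fin N))‖ = 1 →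
      |ham N J σ| ≤ c * N)
    (β₁ β₂ : Fin n → ℝ) (Q : Matrix (Fin n) (Fin n) ℝ) (ε : ℝ) :
    |freeEnergy n N β₁ 0 Q ε J - freeEnergy n N β₂ 0 Q ε J|
      ≤ c * Real.sqrt n * Real.sqrt (∑ k, (β₁ k - β₂ k) ^ 2) := by
  rw [freeEnergy_zero_field, freeEnergy_zero_field, ← sub_div, abs_div, Nat.abs_cast]
  rcases (Nat.cast_nonneg (α := ℝ) N).eq_or_lt with hN | hN
  · rw [← hN, div_zero]; positivity
  rw [div_le_iff₀ hN]
  calc _ ≤ c * N * ∑ k, |β₁ k - β₂ k| :=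
        abs_log_partitionZ_sub_le (by positivity) hham β₁ β₂ Q ε
    _ ≤ c * N * (Real.sqrt n * Real.sqrt (∑ k, (β₁ k - β₂ k) ^ 2)) := by
        gcongr
        simpa using sum_abs_le_sqrt_card_mul_sqrt_sum_sq Finset.univ fun k => β₁ k - β₂ k
    _ = _ := by ring

theorem free_energy_lipschitz_in_beta_general (n : ℕ) (hn : 1 ≤ n)
    (C : ℝ) (ε : ℝ) :
    ∃ L : ℝ, 0 < L ∧
      Filter.Tendsto (fun N : ℕ => disorder N
        {J | ∀ Q : Matrix (Fin n) (Fin n) ℝ, Q.IsSymm → Q.PosDef →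
          (∀ k, Q k k = 1) →
          ∀ β₁ β₂ : Fin n → ℝ, (∀ k, 0 ≤ β₁ k) → (∀ k, 0 ≤ β₂ k) →
            Real.sqrt (∑ k, β₁ k ^ 2) ≤ C → Real.sqrt (∑ k, β₂ k ^ 2) ≤ C →
            |freeEnergy n N β₁ 0 Q ε J - freeEnergy n N β₂ 0 Q ε J|
              ≤ L * Real.sqrt (∑ k, (β₁ k - β₂ k) ^ 2)})
        Filter.atTop (nhds 1) := by
  have hdecay :
      Tendsto (fun N => ENNReal.ofReal (2 * (9 * Real.exp (-8)) ^ N)) atTop (nhds 0) := by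
    have hr : 9 * Real.exp (-8) < 1 := by
      rw [Real.exp_neg, ← div_eq_mul_inv, div_lt_one (Real.exp_pos 8)]
      linarith [Real.add_one_lt_exp (by norm_num : (8 : ℝ) ≠ 0)]
    simpa using ENNReal.tendsto_ofReal
      ((tendsto_pow_atTop_nhds_zero_of_lt_one (by positivity) hr).const_mul 2)
  refine ⟨8 * Real.sqrt n, mul_pos (by norm_num) (Real.sqrt_pos.2 (by exact_mod_cast hn)),
    tendsto_measure_one_of_measure_compl_le hdecay fun N => ?_⟩
  refine (measure_mono fun J hJ => ?_).trans (disorder_norm_couplingOp_gt_le N)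
  change 8 * Real.sqrt N < ‖couplingOp J‖
  by_contra! hnorm
  refine hJ fun Q _ _ _ β₁ β₂ _ _ _ _ =>
    abs_freeEnergy_sub_le (by norm_num) (fun σ hσ => ?_) β₁ β₂ Q ε
  calc |ham N J σ| ≤ Real.sqrt N * (8 * Real.sqrt N) :=
        (abs_ham_le_norm_couplingOp J hσ).trans (by gcongr)
    _ = 8 * N := by rw [mul_left_comm, Real.mul_self_sqrt (Nat.cast_nonneg _)]

/-- **Lipschitz property of the free energy in the inverse temperatures** (Lemma 3.8):
there is `L = L(C,n) > 0` with
`lim_{N→∞} P(∀ Q, ∀ |β¹|,|β²| ≤ C, |F^ε_N(β¹,0,Q) − F^ε_N(β²,0,Q)| ≤ L|β¹−β²|) = 1`. -/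
theorem free_energy_lipschitz_in_beta (n : ℕ) (hn : 1 ≤ n)
    (C : ℝ) (hC : 0 < C) (ε : ℝ) (hε : 0 < ε) :
    ∃ L : ℝ, 0 < L ∧
      Filter.Tendsto (fun N : ℕ => disorder N
        {J | ∀ Q : Matrix (Fin n) (Fin n) ℝ, Q.IsSymm → Q.PosDef →
          (∀ k, Q k k = 1) →
          ∀ β₁ β₂ : Fin n → ℝ, (∀ k, 0 ≤ β₁ k) → (∀ k, 0 ≤ β₂ k) →
            Real.sqrt (∑ k, β₁ k ^ 2) ≤ C → Real.sqrt (∑ k, β₂ k ^ 2) ≤ C →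
            |freeEnergy n N β₁ 0 Q ε J - freeEnergy n N β₂ 0 Q ε J|
              ≤ L * Real.sqrt (∑ k, (β₁ k - β₂ k) ^ 2)})
        Filter.atTop (nhds 1) :=
  free_energy_lipschitz_in_beta_general n hn C ε

end
end
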